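/- Suppose Σ ⊆ E^κ_{≥χ} is a stationary set and c : [κ]² → θ is a Σ-closed witness to U(κ, 2, θ, χ). Then for every family A ⊆ [κ]^{<χ} of κ-many pairwise disjoint sets, every club D ⊆ κ, and every i < θ, there exist γ ∈ D, a ∈ A, and ε < γ such that γ < a and c(α,β) > i for all α ∈ (ε, γ) and β ∈ a. -/

import Mathlib

open Cardinal Set Ordinal

noncomputable section

/-- `s` (a set in a `Type 1`, such as a set of ordinals) has small cardinality `μ`. -/
def HasCard {α : Type 1} (s : Set α) (μ : Cardinal.{0}) : Prop :=
  Cardinal.mk s = Cardinal.lift.{1, 0} μ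

/-- `a < b` for sets of ordinals: every element of `a` is below every element of `b`. -/
def SetLT (a b : Set Ordinal) : Prop := ∀ α ∈ a, ∀ β ∈ b, α < β

/-- `A` is a family of `κ`-many pairwise disjoint subsets of `κ`, each of cardinality `χ'`. -/
def IsDisjFamily (κ χ' : Cardinal) (A : Set (Set Ordinal)) : Prop :=
  (∀ a ∈ A, a ⊆ Set.Iio κ.ord ∧ HasCard a χ') ∧
    A.PairwiseDisjoint id ∧ HasCard A κ

/-- `A` is a family of `κ`-many pairwise disjoint subsets of `κ`, each of cardinality `< χ`. -/
def IsDisjFamilyLT (κ χ : Cardinal) (A : Set (Set Ordinal)) : Prop :=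
  (∀ a ∈ A, a ⊆ Set.Iio κ.ord ∧ Cardinal.mk a < Cardinal.lift.{1, 0} χ) ∧
    A.PairwiseDisjoint id ∧ HasCard A κ

/-- `c` is a coloring of pairs of ordinals below `κ` with colors `< θ`. -/
def IsColoring (κ θ : Cardinal) (c : Ordinal → Ordinal → Ordinal) : Prop :=
  ∀ α β : Ordinal, α < β → β < κ.ord → c α β < θ.ord

/-- `c` witnesses `U(κ, μ, θ, χ)`. -/
def WitnessU (κ μ θ χ : Cardinal) (c : Ordinal → Ordinal → Ordinal) : Prop :=
  IsColoring κ θ c ∧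
    ∀ χ' < χ, ∀ A : Set (Set Ordinal), IsDisjFamily κ χ' A →
      ∀ i < θ.ord, ∃ B ⊆ A, HasCard B μ ∧
        ∀ a ∈ B, ∀ b ∈ B, SetLT a b → ∀ α ∈ a, ∀ β ∈ b, i < c α β

/-- The principle `U(κ, μ, θ, χ)`. -/
def U (κ μ θ χ : Cardinal) : Prop := ∃ c, WitnessU κ μ θ χ c

/-- `D` is a club in (the ordinal) `o`: a closed and unbounded subset of `o`. -/
def IsClubOrd (D : Set Ordinal) (o : Ordinal) : Prop :=
  D ⊆ Set.Iio o ∧ (∀ α < o, ∃ β ∈ D, α ≤ β) ∧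
    ∀ γ < o, 0 < γ → (∀ x < γ, ∃ β ∈ D, x < β ∧ β < γ) → γ ∈ D

/-- `S` is stationary in `o`: it meets every club in `o`. -/
def IsStationaryOrd (S : Set Ordinal) (o : Ordinal) : Prop :=
  ∀ D, IsClubOrd D o → (S ∩ D).Nonempty

/-- `D^c_{≤i}(β) = {α < β : c (α, β) ≤ i}`. -/
def DleI (c : Ordinal → Ordinal → Ordinal) (i β : Ordinal) : Set Ordinal :=
  {α | α < β ∧ c α β ≤ i}

/-- `c` is `Σ`-closed: for all `β < κ` and `i ≤ θ`,
`acc⁺(D^c_{≤i}(β)) ∩ Σ ⊆ D^c_{≤i}(β)`. -/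
def SigmaClosed (κ θ : Cardinal) (Sig : Set Ordinal)
    (c : Ordinal → Ordinal → Ordinal) : Prop :=
  ∀ β < κ.ord, ∀ i ≤ θ.ord, ∀ γ ∈ Sig, 0 < γ →
    (∀ x < γ, ∃ δ ∈ DleI c i β, x < δ ∧ δ < γ) →
    (∃ δ ∈ DleI c i β, γ ≤ δ) → γ ∈ DleI c i β

/-!
Shrink `A` to `κ` many sets of one size `ν < χ`, and attach to each `a` the set
`S(a) = {sup D^c_{≤i}(β) : β ∈ a}` of fewer than `χ` ordinals. Splitting `Σ ∩ D` into `χ`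
disjoint pieces of size `κ`, some piece `R` misses `S(a)` for `κ` many `a`, forming `B`.
A maximal chain of blocks `{γ} ∪ a` (`γ ∈ R`, `a ∈ B`, `γ < a`) has size `κ`, so `U(κ, 2, θ, χ)`
gives blocks `{γ} ∪ a < {γ'} ∪ a'` with all colours between them above `i`. If no `ε` works for
`γ` and `a'`, then, as `|a'| < cf γ`, some `D^c_{≤i}(β)` with `β ∈ a'` is cofinal in `γ`; since
`c(γ, β) > i`, `Σ`-closedness keeps it below `γ`, so `γ = sup D^c_{≤i}(β) ∈ S(a')`, which is
impossible for `γ ∈ R`.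
-/

universe u v

theorem exists_forall_le_of_mk_lt_cof {o : Ordinal.{u}} {s : Set Ordinal.{u}}
    (hs : s ⊆ Iio o) (h : #s < Cardinal.lift.{u + 1} o.cof) : ∃ b < o, ∀ x ∈ s, x ≤ b :=
  ⟨sSup s, sSup_lt_of_lt_cof (by rwa [← lift_cof]) hs,
    fun _ hx => le_csSup ⟨o, fun _ hy => (hs hy).le⟩ hx⟩

theorem mk_Iic_lt_lift {κ : Cardinal.{u}} (hκ : ℵ₀ ≤ κ) {ζ : Ordinal.{u}} (hζ : ζ < κ.ord) :
    #(Iic ζ) < Cardinal.lift.{u + 1} κ := by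
  rw [← Order.Iio_succ, Cardinal.mk_Iio_ordinal, Cardinal.lift_lt, ← Cardinal.lt_ord]
  exact (Cardinal.isSuccLimit_ord hκ).succ_lt hζ

theorem exists_gt_of_lift_le_mk {κ : Cardinal.{u}} (hκ : ℵ₀ ≤ κ) {s : Set Ordinal.{u}}
    (h : Cardinal.lift.{u + 1} κ ≤ #s) {ζ : Ordinal.{u}} (hζ : ζ < κ.ord) : ∃ x ∈ s, ζ < x := by
  by_contra! hs
  exact (h.trans (Cardinal.mk_le_mk_of_subset hs)).not_gt (mk_Iic_lt_lift hκ hζ)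

theorem exists_forall_gt_of_lift_le_mk {κ : Cardinal.{u}} (hκ : ℵ₀ ≤ κ)
    {B : Set (Set Ordinal.{u})} (hB : B.PairwiseDisjoint id) (h : Cardinal.lift.{u + 1} κ ≤ #B)
    {ζ : Ordinal.{u}} (hζ : ζ < κ.ord) : ∃ a ∈ B, ∀ x ∈ a, ζ < x := by
  by_contra! hs
  choose w hw hwζ using fun b : B => hs b b.2
  have hinj : Function.Injective fun b : B => (⟨w b, hwζ b⟩ : Iic ζ) := by
    intro b b' hbb'
    by_contra hne
    exact (hB b.2 b'.2 (Subtype.coe_ne_coe.2 hne)).ne_of_mem (hw b) (hw b')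
      (congrArg Subtype.val hbb')
  exact (h.trans (Cardinal.mk_le_of_injective hinj)).not_gt (mk_Iic_lt_lift hκ hζ)

theorem lift_le_mk_of_forall_exists_gt {κ : Cardinal.{u}} (hκ : κ.IsRegular) {s : Set Ordinal.{u}}
    (hs : s ⊆ Iio κ.ord) (h : ∀ ζ < κ.ord, ∃ x ∈ s, ζ < x) : Cardinal.lift.{u + 1} κ ≤ #s := by
  by_contra! hlt
  obtain ⟨b, hb, hbs⟩ := exists_forall_le_of_mk_lt_cof hs (by rwa [hκ.cof_ord])
  obtain ⟨x, hx, hbx⟩ := h b hb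
  exact (hbs x hx).not_gt hbx

theorem exists_le_mk_fiber {κ : Cardinal.{u}} (hκ : κ.IsRegular) {X Y : Type u} {s : Set X}
    (hs : κ ≤ #s) {t : Set Y} (f : X → Y) (hf : MapsTo f s t) (ht : #t < κ) :
    ∃ y ∈ t, κ ≤ #{x ∈ s | f x = y} := by
  obtain ⟨y, v, hvs, hv, hfv⟩ := infinite_pigeonhole_set (fun x : s => (⟨f x, hf x.2⟩ : t)) κ hs
    hκ.aleph0_le (by rwa [hκ.cof_ord])
  exact ⟨y, y.2, hv.trans (Cardinal.mk_le_mk_of_subset fun x hx =>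
    ⟨hvs hx, congrArg Subtype.val (hfv hx)⟩)⟩

theorem exists_disjoint_of_mk_lt {ι α : Type u} {P : ι → Set α}
    (hP : Pairwise fun j j' => Disjoint (P j) (P j')) {s : Set α} (hs : #s < #ι) :
    ∃ j, Disjoint (P j) s := by
  by_contra! h
  choose x hxP hxs using fun j => Set.not_disjoint_iff.1 (h j)
  have hinj : Function.Injective fun j => (⟨x j, hxs j⟩ : s) := by
    intro j j' hjj'
    by_contra hne
    exact (hP hne).ne_of_mem (hxP j) (hxP j') (congrArg Subtype.val hjj')
  exact hs.not_ge (Cardinal.mk_le_of_injective hinj)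

theorem exists_large_disjoint_of_small {α X : Type u} {κ χ : Cardinal.{u}} (hκ : κ.IsRegular)
    (hχ : χ ≠ 0) (hχκ : χ < κ) {T : Set α} (hT : #T = κ) {A : Set X} (hA : κ ≤ #A)
    (S : X → Set α) (hS : ∀ a ∈ A, #(S a) < χ) :
    ∃ R ⊆ T, #R = κ ∧ ∃ B ⊆ A, κ ≤ #B ∧ ∀ a ∈ B, Disjoint R (S a) := by
  obtain ⟨e⟩ : Nonempty (T ≃ χ.out × κ.out) := by
    rw [← Cardinal.eq, Cardinal.mk_prod, Cardinal.lift_id, Cardinal.lift_id, Cardinal.mk_out,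
      Cardinal.mk_out, Cardinal.mul_eq_right hκ.aleph0_le hχκ.le hχ, hT]
  set P : χ.out → Set α := fun j => range fun k => (e.symm (j, k) : α)
  have hPT : ∀ j, P j ⊆ T := by
    rintro j _ ⟨k, rfl⟩
    exact (e.symm (j, k)).2
  have hPcard : ∀ j, #(P j) = κ := fun j => by
    rw [Cardinal.mk_range_eq _ fun k k' h => ?_, Cardinal.mk_out]
    simpa using e.symm.injective (Subtype.ext h)
  have hPdisj : Pairwise fun j j' => Disjoint (P j) (P j') := by
    intro j j' hne
    rw [Set.disjoint_left]
    rintro _ ⟨k, rfl⟩ ⟨k', hk'⟩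
    exact hne (congrArg Prod.fst (e.symm.injective (Subtype.ext hk'))).symm
  have : Nonempty χ.out := Cardinal.mk_ne_zero_iff.1 (by rwa [Cardinal.mk_out])
  choose! g hg using fun a ha =>
    exists_disjoint_of_mk_lt hPdisj (s := S a) (by rw [Cardinal.mk_out]; exact hS a ha)
  obtain ⟨j, -, hj⟩ := exists_le_mk_fiber hκ hA g (mapsTo_univ _ _)
    (by rwa [Cardinal.mk_univ, Cardinal.mk_out])
  exact ⟨P j, hPT j, hPcard j, _, fun a ha => ha.1, hj, fun a ha => ha.2 ▸ hg a ha.1⟩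

theorem exists_large_subfamily_mk_eq {κ χ : Cardinal.{u}} (hκ : κ.IsRegular) (hχκ : χ < κ)
    {A : Set (Set Ordinal.{u})} (hA : Cardinal.lift.{u + 1} κ ≤ #A)
    (hAχ : ∀ a ∈ A, #a < Cardinal.lift.{u + 1} χ) :
    ∃ ν < χ, ∃ A₁ ⊆ A, Cardinal.lift.{u + 1} κ ≤ #A₁ ∧ ∀ a ∈ A₁, #a = Cardinal.lift.{u + 1} ν := by
  set μ : Set Ordinal.{u} → Cardinal.{u} := fun a => Function.invFun Cardinal.lift.{u + 1} #a
  have hμ : ∀ a ∈ A, Cardinal.lift.{u + 1} (μ a) = #a := fun a ha =>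
    Function.invFun_eq (Cardinal.mem_range_lift_of_le (hAχ a ha).le)
  have hμχ : MapsTo (fun a => (μ a).ord) A (Iio χ.ord) := fun a ha => by
    rw [mem_Iio, Cardinal.ord_lt_ord, ← Cardinal.lift_lt (a := μ a), hμ a ha]
    exact hAχ a ha
  obtain ⟨j, hj, hfib⟩ := exists_le_mk_fiber hκ.lift hA _ hμχ
    (by rw [Cardinal.mk_Iio_ordinal, Cardinal.card_ord]; exact Cardinal.lift_lt.2 hχκ)
  refine ⟨j.card, Cardinal.lt_ord.1 hj, _, fun a ha => ha.1, hfib, fun a ha => ?_⟩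
  rw [← ha.2, Cardinal.card_ord, hμ a ha.1]

theorem SetLT.disjoint {a b : Set Ordinal.{u}} (h : SetLT a b) : Disjoint a b :=
  Set.disjoint_left.2 fun x hxa hxb => lt_irrefl x (h x hxa x hxb)

theorem IsChain.pairwiseDisjoint_of_setLT {M : Set (Set Ordinal.{u})} (hM : IsChain SetLT M) :
    M.PairwiseDisjoint id :=
  fun _ hz _ hz' hne => (hM hz hz' hne).elim SetLT.disjoint fun h => h.disjoint.symm

theorem IsChain.exists_setLT_of_two_le_mk {M : Set (Set Ordinal.{u})} (hM : IsChain SetLT M)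
    (h : 2 ≤ #M) : ∃ z ∈ M, ∃ z' ∈ M, SetLT z z' := by
  obtain ⟨⟨z, hz⟩, ⟨z', hz'⟩, hne⟩ := Cardinal.two_le_iff.1 h
  exact (hM hz hz' (Subtype.coe_ne_coe.2 hne)).elim (fun h => ⟨z, hz, z', hz', h⟩)
    fun h => ⟨z', hz', z, hz, h⟩

theorem exists_isChain_setLT {κ : Cardinal.{u}} (hκ : κ.IsRegular) {F : Set (Set Ordinal.{u})}
    (hbdd : ∀ z ∈ F, ∃ ζ < κ.ord, ∀ x ∈ z, x ≤ ζ)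
    (hunb : ∀ ζ < κ.ord, ∃ z ∈ F, z.Nonempty ∧ ∀ x ∈ z, ζ < x) :
    ∃ M ⊆ F, IsChain SetLT M ∧ #M = Cardinal.lift.{u + 1} κ := by
  choose! bd hbd hbdle using hbdd
  obtain ⟨M, hM, -⟩ := (IsChain.empty (r := fun z w : F => SetLT z.1 w.1)).exists_maxChain
  have hchain : IsChain SetLT (Subtype.val '' M) :=
    hM.1.image_of_map_rel _ _ Subtype.val fun _ _ h => h
  suffices hle : Cardinal.lift.{u + 1} κ ≤ #(Subtype.val '' M) by
    obtain ⟨N, hN, hNcard⟩ := Cardinal.le_mk_iff_exists_subset.1 hle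
    exact ⟨N, hN.trans (image_subset_iff.2 fun z _ => z.2), hchain.mono hN, hNcard⟩
  by_contra! hlt
  obtain ⟨b, hb, hbM⟩ := exists_forall_le_of_mk_lt_cof (s := bd '' (Subtype.val '' M))
    (by rintro _ ⟨_, ⟨z, -, rfl⟩, rfl⟩; exact hbd z z.2)
    (Cardinal.mk_image_le.trans_lt (by rwa [hκ.cof_ord]))
  obtain ⟨w, hwF, ⟨y, hy⟩, hwb⟩ := hunb b hb
  have hMw : ∀ z ∈ M, SetLT z.1 w := fun z hz x hx y hy =>
    ((hbdle z z.2 x hx).trans (hbM _ ⟨z, ⟨z, hz, rfl⟩, rfl⟩)).trans_lt (hwb y hy)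
  have hwM : (⟨w, hwF⟩ : F) ∈ M := by
    rw [hM.2 (hM.1.insert (a := ⟨w, hwF⟩) fun z hz _ => Or.inr (hMw z hz)) (subset_insert _ _)]
    exact mem_insert _ _
  exact lt_irrefl y (hMw _ hwM y hy y hy)

theorem exists_isDisjFamily_insert {κ ν : Cardinal.{0}} (hκ : κ.IsRegular) (hνκ : ν + 1 < κ)
    {R : Set Ordinal} (hRκ : R ⊆ Iio κ.ord) (hR : Cardinal.lift κ ≤ #R)
    {B : Set (Set Ordinal)} (hBκ : ∀ a ∈ B, a ⊆ Iio κ.ord ∧ #a = Cardinal.lift ν)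
    (hBdisj : B.PairwiseDisjoint id) (hB : Cardinal.lift κ ≤ #B) :
    ∃ M, IsDisjFamily κ (ν + 1) M ∧ IsChain SetLT M ∧
      ∀ z ∈ M, ∃ γ ∈ R, ∃ a ∈ B, (∀ β ∈ a, γ < β) ∧ z = insert γ a := by
  set F := {z | ∃ γ ∈ R, ∃ a ∈ B, (∀ β ∈ a, γ < β) ∧ z = insert γ a}
  have hF : ∀ z ∈ F, z ⊆ Iio κ.ord ∧ HasCard z (ν + 1) := by
    rintro _ ⟨γ, hγ, a, ha, hγa, rfl⟩
    refine ⟨insert_subset (hRκ hγ) (hBκ a ha).1, ?_⟩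
    rw [HasCard, Cardinal.mk_insert fun h => lt_irrefl γ (hγa γ h), (hBκ a ha).2,
      Cardinal.lift_add, Cardinal.lift_one]
  obtain ⟨M, hMF, hM, hMκ⟩ := exists_isChain_setLT hκ (F := F)
    (fun z hz => exists_forall_le_of_mk_lt_cof (hF z hz).1 <| by
      rw [(hF z hz).2, hκ.cof_ord, Cardinal.lift_lt]; exact hνκ)
    fun ζ hζ => by
      obtain ⟨γ, hγ, hζγ⟩ := exists_gt_of_lift_le_mk hκ.aleph0_le hR hζ
      obtain ⟨a, ha, hγa⟩ := exists_forall_gt_of_lift_le_mk hκ.aleph0_le hBdisj hB (hRκ hγ)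
      exact ⟨_, ⟨γ, hγ, a, ha, hγa, rfl⟩, insert_nonempty _ _,
        forall_mem_insert.2 ⟨hζγ, fun β hβ => hζγ.trans (hγa β hβ)⟩⟩
  exact ⟨M, ⟨fun z hz => hF z (hMF hz), hM.pairwiseDisjoint_of_setLT, hMκ⟩, hM,
    fun z hz => hMF hz⟩

theorem IsClubOrd.inter_Ioi {D : Set Ordinal} {o : Ordinal} (hD : IsClubOrd D o)
    (ho : Order.IsSuccLimit o) {ξ : Ordinal} (hξ : ξ < o) : IsClubOrd (D ∩ Ioi ξ) o := by
  obtain ⟨hDo, hunb, hcl⟩ := hD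
  refine ⟨fun x hx => hDo hx.1, fun α hα => ?_, fun γ hγ hγ0 happ => ?_⟩
  · obtain ⟨β, hβD, hβ⟩ := hunb (max α (Order.succ ξ)) (max_lt hα (ho.succ_lt hξ))
    exact ⟨β, ⟨hβD, Order.succ_le_iff.1 ((le_max_right _ _).trans hβ)⟩,
      (le_max_left _ _).trans hβ⟩
  · obtain ⟨β, hβ, -, hβγ⟩ := happ 0 hγ0
    exact ⟨hcl γ hγ hγ0 fun x hx => (happ x hx).imp fun β h => ⟨h.1.1, h.2⟩, hβ.2.trans hβγ⟩

theorem IsStationaryOrd.mk_inter_eq {κ : Cardinal.{u}} (hκ : κ.IsRegular)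
    {S D : Set Ordinal.{u}} (hS : IsStationaryOrd S κ.ord) (hD : IsClubOrd D κ.ord) :
    #(S ∩ D : Set Ordinal) = Cardinal.lift.{u + 1} κ := by
  have hSD : S ∩ D ⊆ Iio κ.ord := fun γ hγ => hD.1 hγ.2
  refine le_antisymm ((Cardinal.mk_le_mk_of_subset hSD).trans (by simp))
    (lift_le_mk_of_forall_exists_gt hκ hSD fun ξ hξ => ?_)
  obtain ⟨γ, hγS, hγD, hξγ⟩ := hS _ (hD.inter_Ioi (Cardinal.isSuccLimit_ord hκ.aleph0_le) hξ)
  exact ⟨γ, ⟨hγS, hγD⟩, hξγ⟩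

def IsCofinalIn (s : Set Ordinal.{u}) (γ : Ordinal.{u}) : Prop :=
  ∀ x < γ, ∃ δ ∈ s, x < δ ∧ δ < γ

theorem exists_isCofinalIn_of_iUnion {ι : Type (u + 1)} {γ : Ordinal.{u}}
    (f : ι → Set Ordinal.{u}) (hι : #ι < Cardinal.lift.{u + 1} γ.cof)
    (h : IsCofinalIn (⋃ j, f j) γ) : ∃ j, IsCofinalIn (f j) γ := by
  by_contra! hf
  simp only [IsCofinalIn, not_forall, not_exists, not_and, not_lt] at hf
  choose x hxγ hx using hf
  obtain ⟨b, hbγ, hb⟩ := exists_forall_le_of_mk_lt_cof (s := range x) (range_subset_iff.2 hxγ)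
    (Cardinal.mk_range_le.trans_lt hι)
  obtain ⟨δ, hδ, hbδ, hδγ⟩ := h b hbγ
  obtain ⟨j, hj⟩ := mem_iUnion.1 hδ
  exact (hx j δ hj ((hb _ ⟨j, rfl⟩).trans_lt hbδ)).not_gt hδγ

theorem SigmaClosed.sSup_dleI_eq {κ : Cardinal.{u}} {θ : Cardinal.{v}} {Sig : Set Ordinal.{u}}
    {c : Ordinal.{u} → Ordinal.{u} → Ordinal.{v}} (hc : SigmaClosed κ θ Sig c)
    {i : Ordinal.{v}} {β γ : Ordinal.{u}} (hi : i ≤ θ.ord) (hβ : β < κ.ord) (hγ : γ ∈ Sig)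
    (hγ0 : 0 < γ) (hγβ : i < c γ β) (hcof : IsCofinalIn (DleI c i β) γ) :
    sSup (DleI c i β) = γ := by
  have hlt : ∀ δ ∈ DleI c i β, δ < γ := fun δ hδ => not_le.1 fun hγδ =>
    (hc β hβ i hi γ hγ hγ0 hcof ⟨δ, hδ, hγδ⟩).2.not_gt hγβ
  obtain ⟨δ, hδ, -⟩ := hcof 0 hγ0
  exact csSup_eq_of_forall_le_of_forall_lt_exists_gt ⟨δ, hδ⟩ (fun δ hδ => (hlt δ hδ).le)
    fun w hw => (hcof w hw).imp fun δ h => ⟨h.1, h.2.1⟩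

theorem SigmaClosed.exists_forall_lt_color {κ : Cardinal.{u}} {θ : Cardinal.{v}}
    {Sig : Set Ordinal.{u}} {c : Ordinal.{u} → Ordinal.{u} → Ordinal.{v}}
    (hc : SigmaClosed κ θ Sig c) {i : Ordinal.{v}} {γ : Ordinal.{u}} (hi : i < θ.ord)
    (hγ : γ ∈ Sig) {a : Set Ordinal.{u}} (ha : a ⊆ Iio κ.ord)
    (hacof : #a < Cardinal.lift.{u + 1} γ.cof) (hγa : ∀ β ∈ a, γ < β)
    (hcol : ∀ β ∈ a, i < c γ β) (hfree : γ ∉ (fun β => sSup (DleI c i β)) '' a) :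
    ∃ ε < γ, ∀ α, ε < α → α < γ → ∀ β ∈ a, i < c α β := by
  by_contra! h
  have hγ0 : 0 < γ := by
    refine pos_iff_ne_zero.2 fun hγ0 => ?_
    simp [hγ0] at hacof
  have hunion : IsCofinalIn (⋃ β : a, DleI c i β) γ := fun ε hε => by
    obtain ⟨α, hεα, hαγ, β, hβ, hαβ⟩ := h ε hε
    exact ⟨α, mem_iUnion.2 ⟨⟨β, hβ⟩, hαγ.trans (hγa β hβ), hαβ⟩, hεα, hαγ⟩
  obtain ⟨⟨β, hβ⟩, hcof⟩ := exists_isCofinalIn_of_iUnion _ hacof hunion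
  exact hfree ⟨β, hβ, hc.sSup_dleI_eq hi.le (ha hβ) hγ hγ0 (hcol β hβ) hcof⟩

theorem stmt10_general (κ θ χ : Cardinal) (Sig : Set Ordinal)
    (c : Ordinal → Ordinal → Ordinal)
    (hκreg : κ.IsRegular)
    (hχ1 : ℵ₀ ≤ χ) (hχ2 : χ < κ)
    (hSig : Sig ⊆ {α : Ordinal | α < κ.ord ∧ χ ≤ α.cof})
    (hstat : IsStationaryOrd Sig κ.ord)
    (hclosed : SigmaClosed κ θ Sig c)
    (hwit : WitnessU κ 2 θ χ c) :
    ∀ A : Set (Set Ordinal), IsDisjFamilyLT κ χ A →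
      ∀ D : Set Ordinal, IsClubOrd D κ.ord → ∀ i < θ.ord,
        ∃ γ ∈ D, ∃ a ∈ A, ∃ ε < γ, (∀ β ∈ a, γ < β) ∧
          ∀ α, ε < α → α < γ → ∀ β ∈ a, i < c α β := by
  rintro A ⟨hAκ, hAdisj, hAcard⟩ D hD i hi
  obtain ⟨ν, hνχ, A₁, hA₁A, hA₁, hA₁ν⟩ :=
    exists_large_subfamily_mk_eq hκreg hχ2 hAcard.ge fun a ha => (hAκ a ha).2
  obtain ⟨R, hRT, hR, B, hBA₁, hB, hRB⟩ := exists_large_disjoint_of_small hκreg.lift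
    (by simpa using (Cardinal.aleph0_pos.trans_le hχ1).ne') (Cardinal.lift_lt.2 hχ2)
    (hstat.mk_inter_eq hκreg hD) hA₁ (fun a => (fun β => sSup (DleI c i β)) '' a)
    fun a ha => Cardinal.mk_image_le.trans_lt (hAκ a (hA₁A ha)).2
  have hBA : B ⊆ A := fun a ha => hA₁A (hBA₁ ha)
  have hν : ν + 1 < χ := Cardinal.add_lt_of_lt hχ1 hνχ (Cardinal.one_lt_aleph0.trans_le hχ1)
  obtain ⟨M, hMfam, hM, hMblocks⟩ := exists_isDisjFamily_insert hκreg (hν.trans hχ2)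
    (fun γ hγ => hD.1 (hRT hγ).2) hR.ge (fun a ha => ⟨(hAκ a (hBA ha)).1, hA₁ν a (hBA₁ ha)⟩)
    (hAdisj.subset hBA) hB
  obtain ⟨B₂, hB₂M, hB₂, hcol⟩ := hwit.2 (ν + 1) hν M hMfam i hi
  obtain ⟨z, hz, z', hz', hzz'⟩ :=
    (hM.mono hB₂M).exists_setLT_of_two_le_mk (hB₂.trans Cardinal.lift_two).ge
  obtain ⟨γ, hγ, a, _, _, rfl⟩ := hMblocks z (hB₂M hz)
  obtain ⟨_, _, a', ha', _, rfl⟩ := hMblocks z' (hB₂M hz')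
  have hγa' : ∀ β ∈ a', γ < β := fun β hβ => hzz' γ (mem_insert _ _) β (mem_insert_of_mem _ hβ)
  obtain ⟨ε, hεγ, hε⟩ := hclosed.exists_forall_lt_color hi (hRT hγ).1 (hAκ a' (hBA ha')).1
    ((hAκ a' (hBA ha')).2.trans_le (Cardinal.lift_le.2 (hSig (hRT hγ).1).2)) hγa'
    (fun β hβ => hcol _ hz _ hz' hzz' γ (mem_insert _ _) β (mem_insert_of_mem _ hβ))
    fun hγS => disjoint_left.1 (hRB a' ha') hγ hγS
  exact ⟨γ, (hRT hγ).2, a', hBA ha', ε, hεγ, hγa', hε⟩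

theorem stmt10 (κ θ χ : Cardinal) (Sig : Set Ordinal)
    (c : Ordinal → Ordinal → Ordinal)
    (hκreg : κ.IsRegular) (hκunc : ℵ₀ < κ) (hθκ : θ ≤ κ)
    (hχ1 : ℵ₀ ≤ χ) (hχ2 : χ < κ)
    (hSig : Sig ⊆ {α : Ordinal | α < κ.ord ∧ χ ≤ α.cof})
    (hstat : IsStationaryOrd Sig κ.ord)
    (hclosed : SigmaClosed κ θ Sig c)
    (hwit : WitnessU κ 2 θ χ c) :
    ∀ A : Set (Set Ordinal), IsDisjFamilyLT κ χ A →
      ∀ D : Set Ordinal, IsClubOrd D κ.ord → ∀ i < θ.ord,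
        ∃ γ ∈ D, ∃ a ∈ A, ∃ ε < γ, (∀ β ∈ a, γ < β) ∧
          ∀ α, ε < α → α < γ → ∀ β ∈ a, i < c α β :=
  stmt10_general κ θ χ Sig c hκreg hχ1 hχ2 hSig hstat hclosed hwit
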